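/- Let T ≥ 3, λ > 0, G > 0, let each f_t : ℝ^d → ℝ be λ-strongly convex and differentiable with ‖∇f_t(w)‖ ≤ G for all w ∈ 𝒟, let w_1 ∈ 𝒟, and define iterates by w_{t+1} = Π(w_t − η_t·∇f_t(w_t)) with step sizes η_t = 1/(λt). If the switching budget S satisfies S ≥ (2G/λ)·log(T + 1), then the continuous switching constraint Σ_{t=2}^T ‖w_t − w_{t−1}‖ ≤ S holds, and the regret satisfies R = Σ_{t=1}^T f_t(w_t) − min_{w ∈ 𝒟} Σ_{t=1}^T f_t(w) ≤ λ·D² + (2G²/λ)·log(T + 1). -/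

import Mathlib

/-!
Each round moves the iterate by at most `η_t G = G / (λ t)`, because the projection onto the
ball is nonexpansive towards points of the ball; hence the switching cost is at most
`(G / λ) H_{T-1}`. For the regret against `u`, expanding `‖w_t - η_t g_t - u‖²` bounds
`⟪g_t, w_t - u⟫` by `(‖w_t - u‖² - ‖w_{t+1} - u‖²) / (2 η_t) + η_t G² / 2`; after subtracting the
strong convexity term `λ/2 ‖w_t - u‖²`, the choice `η_t = 1 / (λ t)` makes the distance terms
telescope, leaving `(G² / (2 λ)) H_T`. Both harmonic numbers are at most
`1 + log T ≤ 2 log (T + 1)`.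
-/

open scoped InnerProductSpace BigOperators

noncomputable def ballProj (d : ℕ) (D : ℝ) (p : EuclideanSpace ℝ (Fin d)) :
    EuclideanSpace ℝ (Fin d) :=
  if ‖p‖ ≤ D / 2 then p else (D / (2 * ‖p‖)) • p

open Finset

section RadialRetraction

variable {E : Type*} [NormedAddCommGroup E] [InnerProductSpace ℝ E]

lemma norm_smul_sub_le_norm_sub {c : ℝ} (hc₀ : 0 ≤ c) (hc₁ : c ≤ 1) {p q : E}
    (hq : ‖q‖ ≤ c * ‖p‖) : ‖c • p - q‖ ≤ ‖p - q‖ := by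
  have hpq : ⟪p, q⟫_ℝ ≤ c * ‖p‖ ^ 2 :=
    calc ⟪p, q⟫_ℝ ≤ ‖p‖ * ‖q‖ := real_inner_le_norm p q
      _ ≤ ‖p‖ * (c * ‖p‖) := by gcongr
      _ = c * ‖p‖ ^ 2 := by ring
  -- `‖p - q‖² - ‖c • p - q‖² = (1 - c) ((1 + c) ‖p‖² - 2 ⟪p, q⟫) ≥ (1 - c)² ‖p‖²`
  rw [← sq_le_sq₀ (norm_nonneg _) (norm_nonneg _), norm_sub_sq_real, norm_sub_sq_real, norm_smul,
    real_inner_smul_left, Real.norm_eq_abs, abs_of_nonneg hc₀]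
  nlinarith [mul_le_mul_of_nonneg_left hpq (sub_nonneg.2 hc₁),
    mul_nonneg (sq_nonneg (1 - c)) (sq_nonneg ‖p‖)]

end RadialRetraction

section BallProjection

variable {d : ℕ} {D : ℝ}

lemma ballProj_mem_closedBall (hD : 0 ≤ D) (p : EuclideanSpace ℝ (Fin d)) :
    ballProj d D p ∈ Metric.closedBall 0 (D / 2) := by
  rw [mem_closedBall_zero_iff, ballProj]
  split_ifs with h
  · exact h
  · have hp : 0 < ‖p‖ := by linarith
    rw [norm_smul, Real.norm_eq_abs, abs_of_nonneg (div_nonneg hD (by positivity)),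
      div_mul_eq_mul_div, mul_div_mul_right _ _ hp.ne']

lemma norm_ballProj_sub_le {q : EuclideanSpace ℝ (Fin d)} (hq : q ∈ Metric.closedBall 0 (D / 2))
    (p : EuclideanSpace ℝ (Fin d)) : ‖ballProj d D p - q‖ ≤ ‖p - q‖ := by
  rw [mem_closedBall_zero_iff] at hq
  rw [ballProj]
  split_ifs with h
  · exact le_rfl
  · have hD : 0 ≤ D := by linarith [norm_nonneg q]
    have hp : 0 < ‖p‖ := by linarith
    refine norm_smul_sub_le_norm_sub (div_nonneg hD (by positivity)) ?_ ?_
    · rw [div_le_one (by positivity)]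
      linarith
    · rwa [div_mul_eq_mul_div, mul_div_mul_right _ _ hp.ne']

end BallProjection

section OnlineGradientDescent

variable {E : Type*} [NormedAddCommGroup E] [InnerProductSpace ℝ E]

lemma inner_sub_le_of_norm_sub_le {η : ℝ} (hη : 0 < η) {w g p u : E}
    (hp : ‖p - u‖ ≤ ‖w - η • g - u‖) :
    ⟪g, w - u⟫_ℝ ≤ (‖w - u‖ ^ 2 - ‖p - u‖ ^ 2) / (2 * η) + η / 2 * ‖g‖ ^ 2 := by
  have h := pow_le_pow_left₀ (norm_nonneg _) hp 2
  have hexp : ‖w - η • g - u‖ ^ 2 = ‖w - u‖ ^ 2 - 2 * η * ⟪g, w - u⟫_ℝ + η ^ 2 * ‖g‖ ^ 2 := by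
    rw [show w - η • g - u = (w - u) - η • g by abel, norm_sub_sq_real, real_inner_smul_right,
      norm_smul, Real.norm_eq_abs, abs_of_pos hη, real_inner_comm]
    ring
  rw [div_add' _ _ _ (by positivity), le_div_iff₀ (by positivity)]
  nlinarith

lemma inner_sub_sq_le_of_norm_sub_le {lam G t : ℝ} (hlam : 0 < lam) (ht : 0 < t) {w g p u : E}
    (hg : ‖g‖ ≤ G) (hp : ‖p - u‖ ≤ ‖w - (1 / (lam * t)) • g - u‖) :
    ⟪g, w - u⟫_ℝ - lam / 2 * ‖w - u‖ ^ 2 ≤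
      G ^ 2 / (2 * lam) * (1 / t) -
        (lam * t / 2 * ‖p - u‖ ^ 2 - lam * (t - 1) / 2 * ‖w - u‖ ^ 2) := by
  have h := inner_sub_le_of_norm_sub_le (by positivity) hp
  have hg2 : ‖g‖ ^ 2 ≤ G ^ 2 := pow_le_pow_left₀ (norm_nonneg g) hg 2
  have hη : 1 / (lam * t) / 2 * ‖g‖ ^ 2 ≤ G ^ 2 / (2 * lam) * (1 / t) := by
    rw [show G ^ 2 / (2 * lam) * (1 / t) = 1 / (lam * t) / 2 * G ^ 2 by field_simp]
    gcongr
  have hdiv : (‖w - u‖ ^ 2 - ‖p - u‖ ^ 2) / (2 * (1 / (lam * t))) =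
      lam * t / 2 * (‖w - u‖ ^ 2 - ‖p - u‖ ^ 2) := by
    field_simp
  linarith

def IsOGDPath (P : E → E) (lam : ℝ) (g : ℕ → E) (T : ℕ) (w : ℕ → E) : Prop :=
  ∀ t ∈ Icc 1 (T - 1), w (t + 1) = P (w t - (1 / (lam * t)) • g t)

variable {K : Set E} {P : E → E} {lam G : ℝ} {g w : ℕ → E} {T : ℕ}

lemma IsOGDPath.mem (hPK : ∀ p, P p ∈ K) (hw : IsOGDPath P lam g T w) (hw1 : w 1 ∈ K) :
    ∀ t ∈ Icc 1 T, w t ∈ K := by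
  intro t ht
  rw [mem_Icc] at ht
  obtain rfl | ⟨s, rfl, hs⟩ : t = 1 ∨ ∃ s, t = s + 1 ∧ 1 ≤ s := by
    rcases Nat.lt_or_ge t 2 with h | h
    · exact .inl (by omega)
    · exact .inr ⟨t - 1, by omega, by omega⟩
  · exact hw1
  · rw [hw s (mem_Icc.2 ⟨hs, by omega⟩)]
    exact hPK _

lemma IsOGDPath.sum_norm_sub_pred_le (hP : ∀ p, ∀ u ∈ K, ‖P p - u‖ ≤ ‖p - u‖)
    (hw : IsOGDPath P lam g T w) (hlam : 0 < lam) (hwK : ∀ t ∈ Icc 1 T, w t ∈ K)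
    (hg : ∀ t ∈ Icc 1 T, ‖g t‖ ≤ G) :
    ∑ t ∈ Icc 2 T, ‖w t - w (t - 1)‖ ≤ G / lam * ∑ t ∈ Icc 1 (T - 1), 1 / (t : ℝ) := by
  have hshift : ∑ t ∈ Icc 2 T, ‖w t - w (t - 1)‖ = ∑ t ∈ Icc 1 (T - 1), ‖w (t + 1) - w t‖ := by
    refine sum_nbij' (· - 1) (· + 1) ?_ ?_ ?_ ?_ ?_ <;> intro t ht <;>
      simp only [mem_Icc] at ht ⊢
    · omega
    · omega
    · omega
    · omega
    · rw [Nat.sub_add_cancel (by omega)]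
  rw [hshift, mul_sum]
  refine sum_le_sum fun t ht => ?_
  obtain ⟨ht₁, ht₂⟩ := mem_Icc.1 ht
  have htT : t ∈ Icc 1 T := mem_Icc.2 ⟨ht₁, by omega⟩
  have ht0 : (0 : ℝ) < t := by exact_mod_cast ht₁
  calc ‖w (t + 1) - w t‖ ≤ ‖(w t - (1 / (lam * t)) • g t) - w t‖ := by
        rw [hw t ht]
        exact hP _ _ (hwK t htT)
    _ = 1 / (lam * t) * ‖g t‖ := by
        rw [sub_sub_cancel_left, norm_neg, norm_smul, Real.norm_of_nonneg (by positivity)]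
    _ ≤ 1 / (lam * t) * G := by gcongr; exact hg t htT
    _ = G / lam * (1 / t) := by field_simp

lemma IsOGDPath.sum_sub_le (hP : ∀ p, ∀ u ∈ K, ‖P p - u‖ ≤ ‖p - u‖)
    (hw : IsOGDPath P lam g T w) (hlam : 0 < lam) (hg : ∀ t ∈ Icc 1 T, ‖g t‖ ≤ G) {u : E}
    (hu : u ∈ K) {f : ℕ → E → ℝ}
    (hf : ∀ t ∈ Icc 1 T, f t (w t) + ⟪g t, u - w t⟫_ℝ + lam / 2 * ‖u - w t‖ ^ 2 ≤ f t u) :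
    ∑ t ∈ Icc 1 T, (f t (w t) - f t u) ≤ G ^ 2 / (2 * lam) * ∑ t ∈ Icc 1 T, 1 / (t : ℝ) := by
  rcases Nat.eq_zero_or_pos T with rfl | hT
  · simp
  -- Past round `T` the path is continued by the comparator `u` itself, so that the potential
  -- `c t = lam (t - 1) / 2 * ‖v t - u‖²` telescopes to `c (T + 1) - c 1 = 0`.
  set v : ℕ → E := fun t => if t ≤ T then w t else u
  set c : ℕ → ℝ := fun t => lam * ((t : ℝ) - 1) / 2 * ‖v t - u‖ ^ 2
  have hstep : ∀ t ∈ Icc 1 T, f t (w t) - f t u ≤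
      G ^ 2 / (2 * lam) * (1 / t) - (c (t + 1) - c t) := by
    intro t ht
    have hft := hf t ht
    rw [← neg_sub (w t) u, inner_neg_right, norm_neg] at hft
    have hvt : v t = w t := if_pos (mem_Icc.1 ht).2
    have hnext : ‖v (t + 1) - u‖ ≤ ‖w t - (1 / (lam * t)) • g t - u‖ := by
      by_cases htT : t + 1 ≤ T
      · simp only [v, if_pos htT]
        rw [hw t (mem_Icc.2 ⟨(mem_Icc.1 ht).1, by omega⟩)]
        exact hP _ u hu
      · simp only [v, if_neg htT, sub_self, norm_zero]
        exact norm_nonneg _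
    have := inner_sub_sq_le_of_norm_sub_le hlam (by exact_mod_cast (mem_Icc.1 ht).1) (hg t ht)
      hnext
    simp only [c, hvt]
    push_cast
    linarith
  calc _ ≤ ∑ t ∈ Icc 1 T, (G ^ 2 / (2 * lam) * (1 / t) - (c (t + 1) - c t)) := sum_le_sum hstep
    _ = G ^ 2 / (2 * lam) * ∑ t ∈ Icc 1 T, 1 / (t : ℝ) - (c (T + 1) - c 1) := by
        rw [sum_sub_distrib, mul_sum, sum_Icc_sub hT]
    _ = G ^ 2 / (2 * lam) * ∑ t ∈ Icc 1 T, 1 / (t : ℝ) := by simp [c, v]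

end OnlineGradientDescent

lemma sum_Icc_one_div_le_two_mul_log {n T : ℕ} (hn : n ≤ T) (hT : 2 ≤ T) :
    ∑ t ∈ Icc 1 n, 1 / (t : ℝ) ≤ 2 * Real.log (T + 1) := by
  have hT' : (2 : ℝ) ≤ T := by exact_mod_cast hT
  have hlog_one : 1 ≤ Real.log (T + 1) := by
    rw [Real.le_log_iff_exp_le (by positivity)]
    linarith [Real.exp_one_lt_d9]
  have hlog_n : Real.log n ≤ Real.log (T + 1) := by
    rcases n.eq_zero_or_pos with rfl | hn₀
    · simpa using Real.log_nonneg (by linarith : (1 : ℝ) ≤ T + 1)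
    · exact Real.log_le_log (by positivity) (by norm_cast; omega)
  calc ∑ t ∈ Icc 1 n, 1 / (t : ℝ) = harmonic n := by simp [harmonic_eq_sum_Icc]
    _ ≤ 1 + Real.log n := harmonic_le_one_add_log n
    _ ≤ 2 * Real.log (T + 1) := by linarith

theorem stmt16_general (d T : ℕ) (hT : 3 ≤ T) (D G lam S : ℝ) (hD : 0 < D) (hlam : 0 < lam)
    (hG : 0 < G) (hS : (2 * G / lam) * Real.log ((T : ℝ) + 1) ≤ S)
    (f : ℕ → EuclideanSpace ℝ (Fin d) → ℝ)
    (hsc : ∀ t ∈ Finset.Icc 1 T,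
      ∀ u ∈ Metric.closedBall (0 : EuclideanSpace ℝ (Fin d)) (D / 2),
      ∀ v ∈ Metric.closedBall (0 : EuclideanSpace ℝ (Fin d)) (D / 2),
        f t v + ⟪gradient (f t) v, u - v⟫_ℝ + lam / 2 * ‖u - v‖ ^ 2 ≤ f t u)
    (hgrad : ∀ t ∈ Finset.Icc 1 T,
      ∀ v ∈ Metric.closedBall (0 : EuclideanSpace ℝ (Fin d)) (D / 2), ‖gradient (f t) v‖ ≤ G)
    (w : ℕ → EuclideanSpace ℝ (Fin d))
    (hw1 : w 1 ∈ Metric.closedBall (0 : EuclideanSpace ℝ (Fin d)) (D / 2))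
    (hupd : ∀ t ∈ Finset.Icc 1 (T - 1),
      w (t + 1) = ballProj d D (w t - (1 / (lam * (t : ℝ))) • gradient (f t) (w t))) :
    (∑ t ∈ Finset.Icc 2 T, ‖w t - w (t - 1)‖ ≤ S) ∧
    (∑ t ∈ Finset.Icc 1 T, f t (w t)) -
        (⨅ v : Metric.closedBall (0 : EuclideanSpace ℝ (Fin d)) (D / 2),
          ∑ t ∈ Finset.Icc 1 T, f t (v : EuclideanSpace ℝ (Fin d))) ≤
      lam * D ^ 2 + (2 * G ^ 2 / lam) * Real.log ((T : ℝ) + 1) := by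
  have hw : IsOGDPath (ballProj d D) lam (fun t => gradient (f t) (w t)) T w := hupd
  have hP : ∀ p, ∀ u ∈ Metric.closedBall 0 (D / 2), ‖ballProj d D p - u‖ ≤ ‖p - u‖ :=
    fun p _ hu => norm_ballProj_sub_le hu p
  have hwK := hw.mem (ballProj_mem_closedBall hD.le) hw1
  have hg : ∀ t ∈ Icc 1 T, ‖gradient (f t) (w t)‖ ≤ G := fun t ht => hgrad t ht _ (hwK t ht)
  refine ⟨?_, ?_⟩
  · calc _ ≤ G / lam * ∑ t ∈ Icc 1 (T - 1), 1 / (t : ℝ) := hw.sum_norm_sub_pred_le hP hlam hwK hg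
      _ ≤ G / lam * (2 * Real.log (T + 1)) := by
          gcongr
          exact sum_Icc_one_div_le_two_mul_log (by omega) (by omega)
      _ = 2 * G / lam * Real.log (T + 1) := by ring
      _ ≤ S := hS
  · have : Nonempty (Metric.closedBall (0 : EuclideanSpace ℝ (Fin d)) (D / 2)) :=
      ⟨⟨0, Metric.mem_closedBall_self (by positivity)⟩⟩
    rw [sub_le_comm]
    refine le_ciInf fun ⟨u, hu⟩ => ?_
    have hlog : 0 ≤ Real.log (T + 1) := Real.log_nonneg (by linarith)
    rw [sub_le_comm, ← sum_sub_distrib]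
    calc _ ≤ G ^ 2 / (2 * lam) * ∑ t ∈ Icc 1 T, 1 / (t : ℝ) :=
          hw.sum_sub_le hP hlam hg hu fun t ht => hsc t ht u hu (w t) (hwK t ht)
      _ ≤ G ^ 2 / (2 * lam) * (2 * Real.log (T + 1)) := by
          gcongr
          exact sum_Icc_one_div_le_two_mul_log le_rfl (by omega)
      _ = G ^ 2 / lam * Real.log (T + 1) := by field_simp
      _ ≤ lam * D ^ 2 + 2 * G ^ 2 / lam * Real.log (T + 1) := by
          refine le_add_of_nonneg_of_le (by positivity) ?_
          rw [mul_div_assoc]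
          gcongr
          linarith [show 0 ≤ G ^ 2 / lam by positivity]

/-- For `λ`-strongly convex differentiable losses with gradients bounded by `G`
on the ball `𝒟`, OGD with step sizes `η_t = 1/(λt)`: if `S ≥ (2G/λ)·log (T + 1)`, then the
continuous switching constraint holds and the regret is at most `λ·D² + (2G²/λ)·log (T + 1)`. -/
theorem stmt16 (d T : ℕ) (hT : 3 ≤ T) (D G lam S : ℝ) (hD : 0 < D) (hlam : 0 < lam)
    (hG : 0 < G) (hS : (2 * G / lam) * Real.log ((T : ℝ) + 1) ≤ S)
    (f : ℕ → EuclideanSpace ℝ (Fin d) → ℝ)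
    (hdiff : ∀ t ∈ Finset.Icc 1 T, Differentiable ℝ (f t))
    (hsc : ∀ t ∈ Finset.Icc 1 T,
      ∀ u ∈ Metric.closedBall (0 : EuclideanSpace ℝ (Fin d)) (D / 2),
      ∀ v ∈ Metric.closedBall (0 : EuclideanSpace ℝ (Fin d)) (D / 2),
        f t v + ⟪gradient (f t) v, u - v⟫_ℝ + lam / 2 * ‖u - v‖ ^ 2 ≤ f t u)
    (hgrad : ∀ t ∈ Finset.Icc 1 T,
      ∀ v ∈ Metric.closedBall (0 : EuclideanSpace ℝ (Fin d)) (D / 2), ‖gradient (f t) v‖ ≤ G)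
    (w : ℕ → EuclideanSpace ℝ (Fin d))
    (hw1 : w 1 ∈ Metric.closedBall (0 : EuclideanSpace ℝ (Fin d)) (D / 2))
    (hupd : ∀ t ∈ Finset.Icc 1 (T - 1),
      w (t + 1) = ballProj d D (w t - (1 / (lam * (t : ℝ))) • gradient (f t) (w t))) :
    (∑ t ∈ Finset.Icc 2 T, ‖w t - w (t - 1)‖ ≤ S) ∧
    (∑ t ∈ Finset.Icc 1 T, f t (w t)) -
        (⨅ v : Metric.closedBall (0 : EuclideanSpace ℝ (Fin d)) (D / 2),
          ∑ t ∈ Finset.Icc 1 T, f t (v : EuclideanSpace ℝ (Fin d))) ≤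
      lam * D ^ 2 + (2 * G ^ 2 / lam) * Real.log ((T : ℝ) + 1) :=
  stmt16_general d T hT D G lam S hD hlam hG hS f hsc hgrad w hw1 hupd
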